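/- Let G ⊆ ℝ be a nonempty closed bounded interval, let H > 0 and L ≥ 0, let T ≥ 1, and for each t = 1,…,T let ℓ_t : ℝ → ℝ be twice differentiable with ℓ_t''(x) ≥ H for all x ∈ G and |ℓ_t'(x)| ≤ L for all x ∈ G. Let τ_1 ∈ G and define τ_{t+1} = P_G(τ_t − (1/(H t)) · ℓ_t'(τ_t)) for t ≥ 1, where P_G is the Euclidean projection onto G. Then the regret satisfies Σ_{t=1}^T ℓ_t(τ_t) − min_{τ ∈ G} Σ_{t=1}^T ℓ_t(τ) ≤ (L² / (2H)) · (1 + log T). -/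

import Mathlib

/-!
By strong convexity, `ℓₜ(τₜ) - ℓₜ(τ*) ≤ gₜ dₜ - (H/2) dₜ²` with `gₜ = ℓₜ'(τₜ)`, `dₜ = τₜ - τ*`,
and since the projection does not increase the distance to `τ*`, the step of size `η = 1/(Ht)`
gives `gₜ dₜ ≤ (dₜ² - dₜ₊₁²)/(2η) + η gₜ²/2`. For this step size the quadratic terms telescope
through the potential `H(t-1)/2 · dₜ²`, which vanishes at `t = 1`, leaving
`(L²/(2H)) ∑ 1/t ≤ (L²/(2H))(1 + log T)`.
-/

open Set

theorem abs_max_min_sub_le_abs_sub {a b v : ℝ} (hv : v ∈ Icc a b) (u : ℝ) :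
    |max a (min b u) - v| ≤ |u - v| := by
  rcases le_total u a with hua | hau
  · rw [min_eq_right (hua.trans (hv.1.trans hv.2)), max_eq_left hua,
      abs_of_nonpos (by linarith [hv.1]), abs_of_nonpos (by linarith [hv.1])]
    linarith
  rcases le_total b u with hbu | hub
  · rw [min_eq_left hbu, max_eq_right (hv.1.trans hv.2),
      abs_of_nonneg (by linarith [hv.2]), abs_of_nonneg (by linarith [hv.2])]
    linarith
  · rw [min_eq_right hub, max_eq_right hau]

theorem ConvexOn.add_mul_sub_le_of_hasDerivAt {S : Set ℝ} {f : ℝ → ℝ} {f' x y : ℝ}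
    (hfc : ConvexOn ℝ S f) (hx : x ∈ S) (hy : y ∈ S) (hf : HasDerivAt f f' x) :
    f x + f' * (y - x) ≤ f y := by
  rcases lt_trichotomy x y with hxy | rfl | hyx
  · have := hfc.le_slope_of_hasDerivAt hx hy hxy hf
    rw [slope_def_field, le_div_iff₀ (sub_pos.2 hxy)] at this
    linarith
  · simp
  · have := hfc.slope_le_of_hasDerivAt hy hx hyx hf
    rw [slope_def_field, div_le_iff₀ (sub_pos.2 hyx)] at this
    linarith

theorem add_deriv_mul_add_sq_le_of_le_deriv2 {S : Set ℝ} (hS : Convex ℝ S) {f : ℝ → ℝ}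
    (hf : Differentiable ℝ f) (hf' : Differentiable ℝ (deriv f)) {H : ℝ}
    (hH : ∀ z ∈ S, H ≤ deriv (deriv f) z) {x y : ℝ} (hx : x ∈ S) (hy : y ∈ S) :
    f x + deriv f x * (y - x) + H / 2 * (y - x) ^ 2 ≤ f y := by
  set g : ℝ → ℝ := fun z ↦ f z - H / 2 * (z - x) ^ 2
  have hg : ∀ z, HasDerivAt g (deriv f z - H * (z - x)) z := fun z ↦
    ((hf z).hasDerivAt.sub ((((hasDerivAt_id' z).sub_const x).pow 2).const_mul (H / 2))
      ).congr_deriv (by ring)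
  have hg' : ∀ z, HasDerivAt (fun z ↦ deriv f z - H * (z - x)) (deriv (deriv f) z - H) z :=
    fun z ↦ ((hf' z).hasDerivAt.sub (((hasDerivAt_id' z).sub_const x).const_mul H)).congr_deriv
      (by ring)
  have hgc : ConvexOn ℝ S g :=
    convexOn_of_hasDerivWithinAt2_nonneg hS (fun z _ ↦ (hg z).continuousAt.continuousWithinAt)
      (fun z _ ↦ (hg z).hasDerivWithinAt) (fun z _ ↦ (hg' z).hasDerivWithinAt)
      (fun z hz ↦ sub_nonneg.2 (hH z (interior_subset hz)))
  have := hgc.add_mul_sub_le_of_hasDerivAt hx hy (hg x)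
  simp only [g, sub_self] at this
  linarith

theorem mul_sub_le_of_projected_step {a b u v η : ℝ} (hv : v ∈ Icc a b) (hη : 0 < η) (g : ℝ) :
    g * (u - v) ≤
      ((u - v) ^ 2 - (max a (min b (u - η * g)) - v) ^ 2) / (2 * η) + η / 2 * g ^ 2 := by
  have hproj : (max a (min b (u - η * g)) - v) ^ 2 ≤ (u - η * g - v) ^ 2 :=
    sq_le_sq.2 (abs_max_min_sub_le_abs_sub hv _)
  rw [div_add' _ _ _ (by positivity), le_div_iff₀ (by positivity)]
  nlinarith

theorem sub_le_of_projected_step {a b H L η u v : ℝ} {f : ℝ → ℝ} (hf : Differentiable ℝ f)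
    (hf' : Differentiable ℝ (deriv f)) (hH : ∀ z ∈ Icc a b, H ≤ deriv (deriv f) z)
    (hL : ∀ z ∈ Icc a b, |deriv f z| ≤ L) (hu : u ∈ Icc a b) (hv : v ∈ Icc a b) (hη : 0 < η) :
    f u - f v ≤ ((u - v) ^ 2 - (max a (min b (u - η * deriv f u)) - v) ^ 2) / (2 * η)
      - H / 2 * (u - v) ^ 2 + η / 2 * L ^ 2 := by
  have hconv := add_deriv_mul_add_sq_le_of_le_deriv2 (convex_Icc a b) hf hf' hH hu hv
  have hstep := mul_sub_le_of_projected_step hv hη (u := u) (deriv f u)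
  have hgrad : deriv f u ^ 2 ≤ L ^ 2 := sq_le_sq.2 ((hL u hu).trans (le_abs_self L))
  have : η / 2 * deriv f u ^ 2 ≤ η / 2 * L ^ 2 := by gcongr
  linarith

theorem sub_le_of_projected_step_one_div_mul {a b H L s u v : ℝ} {f : ℝ → ℝ}
    (hf : Differentiable ℝ f) (hf' : Differentiable ℝ (deriv f))
    (hH : ∀ z ∈ Icc a b, H ≤ deriv (deriv f) z) (hL : ∀ z ∈ Icc a b, |deriv f z| ≤ L)
    (hu : u ∈ Icc a b) (hv : v ∈ Icc a b) (hH₀ : 0 < H) (hs : 0 < s) :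
    f u - f v ≤ H * (s - 1) / 2 * (u - v) ^ 2
      - H * s / 2 * (max a (min b (u - 1 / (H * s) * deriv f u)) - v) ^ 2
      + L ^ 2 / (2 * H) * s⁻¹ := by
  convert sub_le_of_projected_step hf hf' hH hL hu hv (η := 1 / (H * s)) (by positivity) using 1
  field_simp
  ring

theorem sum_Icc_inv_le_one_add_log (n : ℕ) :
    ∑ i ∈ Finset.Icc 1 n, (i : ℝ)⁻¹ ≤ 1 + Real.log n := by
  simpa [harmonic_eq_sum_Icc] using harmonic_le_one_add_log n

theorem ogd_strongly_convex_regret_general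
    (a b : ℝ)
    (H L : ℝ) (hH : 0 < H)
    (T : ℕ) (hT : 1 ≤ T)
    (l : ℕ → ℝ → ℝ)
    (hdiff : ∀ t, Differentiable ℝ (l t))
    (hdiff2 : ∀ t, Differentiable ℝ (deriv (l t)))
    (hstrong : ∀ t, ∀ x ∈ Set.Icc a b, H ≤ deriv (deriv (l t)) x)
    (hlip : ∀ t, ∀ x ∈ Set.Icc a b, |deriv (l t) x| ≤ L)
    (P : ℝ → ℝ) (hP : ∀ x, P x = max a (min b x))
    (τ : ℕ → ℝ) (hτ₁ : τ 1 ∈ Set.Icc a b)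
    (hτrec : ∀ t, 1 ≤ t →
      τ (t + 1) = P (τ t - 1 / (H * (t : ℝ)) * deriv (l t) (τ t))) :
    ∀ τstar ∈ Set.Icc a b,
      ∑ t ∈ Finset.Icc 1 T, l t (τ t) - ∑ t ∈ Finset.Icc 1 T, l t τstar ≤
        L ^ 2 / (2 * H) * (1 + Real.log T) := by
  intro τstar hstar
  have hmem : ∀ t, 1 ≤ t → τ t ∈ Icc a b := by
    intro t ht
    induction t, ht using Nat.le_induction with
    | base => exact hτ₁
    | succ t ht _ =>
      rw [hτrec t ht, hP]
      exact ⟨le_max_left _ _, max_le (hstar.1.trans hstar.2) (min_le_left _ _)⟩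
  set Φ : ℕ → ℝ := fun t ↦ H * ((t : ℝ) - 1) / 2 * (τ t - τstar) ^ 2
  have hround : ∀ t ∈ Finset.Icc 1 T,
      l t (τ t) - l t τstar ≤ -(Φ (t + 1) - Φ t) + L ^ 2 / (2 * H) * (t : ℝ)⁻¹ := by
    intro t ht
    have ht : 1 ≤ t := (Finset.mem_Icc.1 ht).1
    have := sub_le_of_projected_step_one_div_mul (hdiff t) (hdiff2 t) (hstrong t) (hlip t)
      (hmem t ht) hstar hH (s := t) (by positivity)
    rw [← hP, ← hτrec t ht] at this
    simp only [Φ, Nat.cast_add, Nat.cast_one, add_sub_cancel_right]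
    linarith
  have hΦ : 0 ≤ Φ (T + 1) := by
    simp only [Φ, Nat.cast_add, Nat.cast_one, add_sub_cancel_right]
    positivity
  calc ∑ t ∈ Finset.Icc 1 T, l t (τ t) - ∑ t ∈ Finset.Icc 1 T, l t τstar
      = ∑ t ∈ Finset.Icc 1 T, (l t (τ t) - l t τstar) := (Finset.sum_sub_distrib _ _).symm
    _ ≤ ∑ t ∈ Finset.Icc 1 T, (-(Φ (t + 1) - Φ t) + L ^ 2 / (2 * H) * (t : ℝ)⁻¹) :=
      Finset.sum_le_sum hround
    _ = -(Φ (T + 1) - Φ 1) + L ^ 2 / (2 * H) * ∑ t ∈ Finset.Icc 1 T, (t : ℝ)⁻¹ := by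
      rw [Finset.sum_add_distrib, Finset.sum_neg_distrib, Finset.sum_Icc_sub hT, Finset.mul_sum]
    _ ≤ L ^ 2 / (2 * H) * (1 + Real.log T) := by
      have hΦ1 : Φ 1 = 0 := by simp [Φ]
      have := mul_le_mul_of_nonneg_left (sum_Icc_inv_le_one_add_log T)
        (by positivity : 0 ≤ L ^ 2 / (2 * H))
      linarith

/-- Logarithmic regret of projected online gradient descent on a closed
bounded interval `G = [a, b]` with step sizes `1/(H t)`, for twice
differentiable losses that are `H`-strongly convex and `L`-Lipschitz on `G`. -/
theorem ogd_strongly_convex_regret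
    (a b : ℝ) (hab : a ≤ b)
    (H L : ℝ) (hH : 0 < H) (hL : 0 ≤ L)
    (T : ℕ) (hT : 1 ≤ T)
    (l : ℕ → ℝ → ℝ)
    (hdiff : ∀ t, Differentiable ℝ (l t))
    (hdiff2 : ∀ t, Differentiable ℝ (deriv (l t)))
    (hstrong : ∀ t, ∀ x ∈ Set.Icc a b, H ≤ deriv (deriv (l t)) x)
    (hlip : ∀ t, ∀ x ∈ Set.Icc a b, |deriv (l t) x| ≤ L)
    (P : ℝ → ℝ) (hP : ∀ x, P x = max a (min b x))
    (τ : ℕ → ℝ) (hτ₁ : τ 1 ∈ Set.Icc a b)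
    (hτrec : ∀ t, 1 ≤ t →
      τ (t + 1) = P (τ t - 1 / (H * (t : ℝ)) * deriv (l t) (τ t))) :
    ∀ τstar ∈ Set.Icc a b,
      ∑ t ∈ Finset.Icc 1 T, l t (τ t) - ∑ t ∈ Finset.Icc 1 T, l t τstar ≤
        L ^ 2 / (2 * H) * (1 + Real.log T) :=
  ogd_strongly_convex_regret_general a b H L hH T hT l hdiff hdiff2 hstrong hlip P hP τ hτ₁ hτrec
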